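/- arXiv:q-alg/9508009 — 3 statements merged into one kernel-verified Lean document; each statement's English description precedes it below -/
import Mathlib

section
/- For N ≥ 2, the function φ_N(x) = θ_{p^N}(xp)·θ_{p^N}(xq⁻¹)·θ_{p^N}(xp⁻¹q) / (θ_{p^N}(xp⁻¹)·θ_{p^N}(xq)·θ_{p^N}(xpq⁻¹)) satisfies φ_N(x)·φ_N(xp)·⋯·φ_N(xp^{N-1}) = 1. -/
/-- θ_a(x) = ∏_{n≥0}(1 - x aⁿ) · ∏_{n≥1}(1 - x⁻¹ aⁿ) · ∏_{n≥1}(1 - aⁿ). -/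
noncomputable def theta (a x : ℂ) : ℂ :=
  (∏' n : ℕ, (1 - x * a ^ n)) * (∏' n : ℕ, (1 - x⁻¹ * a ^ (n + 1))) *
    (∏' n : ℕ, (1 - a ^ (n + 1)))

/-- φ_N(x) = θ_{p^N}(xp)·θ_{p^N}(xq⁻¹)·θ_{p^N}(xp⁻¹q) / (θ_{p^N}(xp⁻¹)·θ_{p^N}(xq)·θ_{p^N}(xpq⁻¹)) -/
noncomputable def phiN (N : ℕ) (p q x : ℂ) : ℂ :=
  theta (p ^ N) (x * p) * theta (p ^ N) (x * q⁻¹) * theta (p ^ N) (x * p⁻¹ * q) /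
    (theta (p ^ N) (x * p⁻¹) * theta (p ^ N) (x * q) * theta (p ^ N) (x * p * q⁻¹))

/-!
Put `Θ(y) = ∏_{k<N} θ_{p^N}(y pᵏ)`; up to a constant factor this is `θ_p(y)`, and telescoping the
quasi-periodicity `θ_{p^N}(y p^N) = -y⁻¹ θ_{p^N}(y)` gives `Θ(yp) = -y⁻¹ Θ(y)`. The product of the
`φ_N(x pᵏ)` is a quotient of six values of `Θ`, and this rule turns numerator and denominator
alike into `p x⁻² Θ(xp⁻¹) Θ(xq⁻¹) Θ(xp⁻¹q)`.
-/

open Finset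

theorem multipliable_one_sub_mul_pow {R : Type*} [NormedCommRing R] [NormOneClass R]
    [CompleteSpace R] (x : R) {a : R} (ha : ‖a‖ < 1) :
    Multipliable fun n : ℕ => 1 - x * a ^ n := by
  have hsum : Summable fun n : ℕ => ‖-(x * a ^ n)‖ :=
    ((summable_geometric_of_lt_one (norm_nonneg a) ha).mul_left ‖x‖).of_nonneg_of_le
      (fun _ => norm_nonneg _) fun n => by
        rw [norm_neg]; exact (norm_mul_le _ _).trans (by gcongr; exact norm_pow_le a n)
  simpa [sub_eq_add_neg] using multipliable_one_add_of_summable hsum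

theorem tprod_one_sub_mul_pow {R : Type*} [NormedCommRing R] [NormOneClass R]
    [CompleteSpace R] (x : R) {a : R} (ha : ‖a‖ < 1) :
    ∏' n : ℕ, (1 - x * a ^ n) = (1 - x) * ∏' n : ℕ, (1 - x * a ^ (n + 1)) := by
  simpa using tprod_eq_zero_mul' (f := fun n => 1 - x * a ^ n) <|
    (multipliable_one_sub_mul_pow (x * a) ha).congr fun n => by ring

theorem theta_mul_self {a x : ℂ} (ha : ‖a‖ < 1) (ha0 : a ≠ 0) (hx : x ≠ 0) :
    theta a (x * a) = -x⁻¹ * theta a x := by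
  have hfst : ∏' n : ℕ, (1 - x * a * a ^ n) = ∏' n : ℕ, (1 - x * a ^ (n + 1)) :=
    tprod_congr fun n => by ring
  have hsnd : ∏' n : ℕ, (1 - (x * a)⁻¹ * a ^ (n + 1)) = ∏' n : ℕ, (1 - x⁻¹ * a ^ n) :=
    tprod_congr fun n => by field_simp; ring
  rw [theta, theta, hfst, hsnd, tprod_one_sub_mul_pow x ha, tprod_one_sub_mul_pow x⁻¹ ha]
  field_simp
  ring

theorem Finset.prod_range_succ_eq_mul_prod_of_quasiperiodic {M : Type*} [CommMonoid M]
    {f : ℕ → M} {N : ℕ} (hN : N ≠ 0) {c : M} (hf : f N = c * f 0) :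
    ∏ k ∈ range N, f (k + 1) = c * ∏ k ∈ range N, f k := by
  obtain ⟨n, rfl⟩ := Nat.exists_eq_succ_of_ne_zero hN
  rw [prod_range_succ, prod_range_succ', hf, mul_left_comm, mul_comm]

noncomputable def thetaOrbitProd (N : ℕ) (p y : ℂ) : ℂ :=
  ∏ k ∈ range N, theta (p ^ N) (y * p ^ k)

theorem thetaOrbitProd_mul_self {N : ℕ} (hN : N ≠ 0) {p : ℂ} (hp0 : p ≠ 0) (hp1 : ‖p‖ < 1)
    {y : ℂ} (hy : y ≠ 0) : thetaOrbitProd N p (y * p) = -y⁻¹ * thetaOrbitProd N p y := by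
  have hpN : ‖p ^ N‖ < 1 := by rw [norm_pow]; exact pow_lt_one₀ (norm_nonneg p) hp1 hN
  simp only [thetaOrbitProd, mul_assoc, ← pow_succ']
  refine prod_range_succ_eq_mul_prod_of_quasiperiodic
    (f := fun k => theta (p ^ N) (y * p ^ k)) hN ?_
  rw [pow_zero, mul_one]
  exact theta_mul_self hpN (pow_ne_zero N hp0) hy

theorem prod_phiN_mul_pow_eq_div {N : ℕ} (p q x : ℂ) :
    ∏ k ∈ range N, phiN N p q (x * p ^ k) =
      thetaOrbitProd N p (x * p) * thetaOrbitProd N p (x * q⁻¹) *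
          thetaOrbitProd N p (x * p⁻¹ * q) /
        (thetaOrbitProd N p (x * p⁻¹) * thetaOrbitProd N p (x * q) *
          thetaOrbitProd N p (x * p * q⁻¹)) := by
  simp only [phiN, thetaOrbitProd, prod_div_distrib, prod_mul_distrib, mul_right_comm _ (p ^ _)]

/-- φ_N(x)·φ_N(xp)·⋯·φ_N(xp^{N-1}) = 1. -/
theorem phiN_functional_equation (N : ℕ) (hN : 2 ≤ N) (p q x : ℂ)
    (hp0 : 0 < ‖p‖) (hp1 : ‖p‖ < 1) (hq : q ≠ 0) (hx : x ≠ 0)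
    (hfac : ∀ k < N, ∀ c ∈ ({p, q⁻¹, p⁻¹ * q, p⁻¹, q, p * q⁻¹} : Set ℂ),
      theta (p ^ N) (x * p ^ k * c) ≠ 0) :
    ∏ k ∈ Finset.range N, phiN N p q (x * p ^ k) = 1 := by
  have hp : p ≠ 0 := norm_pos_iff.mp hp0
  have shift (y z : ℂ) (hy : y ≠ 0) (hz : y * p = z) :
      thetaOrbitProd N p z = -y⁻¹ * thetaOrbitProd N p y :=
    hz ▸ thetaOrbitProd_mul_self (by omega) hp hp1 hy
  have hden : thetaOrbitProd N p (x * p⁻¹) * thetaOrbitProd N p (x * q) *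
      thetaOrbitProd N p (x * p * q⁻¹) ≠ 0 := by
    simp only [thetaOrbitProd, mul_ne_zero_iff, prod_ne_zero_iff, mem_range]
    refine ⟨⟨fun k hk => ?_, fun k hk => ?_⟩, fun k hk => ?_⟩
    · convert hfac k hk p⁻¹ (by simp) using 2; ring
    · convert hfac k hk q (by simp) using 2; ring
    · convert hfac k hk (p * q⁻¹) (by simp) using 2; ring
  rw [prod_phiN_mul_pow_eq_div, div_eq_one_iff_eq hden, shift x (x * p) hx rfl,
    shift (x * p⁻¹) x (by simp [hx, hp]) (by field_simp),
    shift (x * p⁻¹ * q) (x * q) (by simp [hx, hp, hq]) (by field_simp),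
    shift (x * q⁻¹) (x * p * q⁻¹) (by simp [hx, hq]) (by ring)]
  field_simp
end

section
/- The function ψ_{ij}(x) = (-1)^{A_{ij}-1} x^{A_{ij} - A_{ij}β - 1} · θ_q(x p^{A_{ij}/2}) / θ_q(x⁻¹ p^{A_{ij}/2}) factorizes as ψ_{ij}(x) = φ_{ij}(x)/φ_{ij}(x⁻¹), where φ_{ij}(x) = x^{-β A_{ij}/2} · θ_q(x p^{A_{ij}/2}) / θ_q(x q^{A_{ij}/2}). -/
section NormedRing

variable {R : Type*} [NormedCommRing R] [NormOneClass R] [CompleteSpace R] {q : R}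

theorem multipliable_one_sub_mul_pow_s7 (hq : ‖q‖ < 1) (z : R) :
    Multipliable fun n : ℕ ↦ 1 - z * q ^ n := by
  simp only [sub_eq_add_neg]
  refine multipliable_one_add_of_summable <|
    ((summable_geometric_of_lt_one (norm_nonneg q) hq).mul_left ‖z‖).of_nonneg_of_le
      (fun _ ↦ norm_nonneg _) fun n ↦ ?_
  rw [norm_neg]
  exact (norm_mul_le _ _).trans (mul_le_mul_of_nonneg_left (norm_pow_le _ _) (norm_nonneg z))

theorem tprod_one_sub_mul_pow_eq_one_sub_mul (hq : ‖q‖ < 1) (z : R) :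
    ∏' n : ℕ, (1 - z * q ^ n) = (1 - z) * ∏' n : ℕ, (1 - z * q ^ (n + 1)) := by
  have hmul : Multipliable fun n : ℕ ↦ 1 - z * q ^ (n + 1) := by
    refine (multipliable_one_sub_mul_pow_s7 hq (z * q)).congr fun n ↦ ?_
    ring
  rw [tprod_eq_zero_mul' (f := fun n : ℕ ↦ 1 - z * q ^ n) hmul, pow_zero, mul_one]

end NormedRing

section Theta

variable {q : ℂ}

theorem theta_inv (hq : ‖q‖ < 1) {x : ℂ} (hx : x ≠ 0) : theta q x⁻¹ = -x⁻¹ * theta q x := by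
  have hfirst : (1 : ℂ) - x⁻¹ = -x⁻¹ * (1 - x) := by field_simp; ring
  unfold theta
  rw [inv_inv, tprod_one_sub_mul_pow_eq_one_sub_mul hq x⁻¹,
    tprod_one_sub_mul_pow_eq_one_sub_mul hq x, hfirst]
  ring

theorem theta_mul_nome (hq : ‖q‖ < 1) (hq0 : q ≠ 0) {x : ℂ} (hx : x ≠ 0) :
    theta q (x * q) = -x⁻¹ * theta q x := by
  have hfirst : (1 : ℂ) - x⁻¹ = -x⁻¹ * (1 - x) := by field_simp; ring
  have hshift : ∀ n : ℕ, 1 - x * q * q ^ n = 1 - x * q ^ (n + 1) := fun n ↦ by ring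
  have hshift' : ∀ n : ℕ, 1 - (x * q)⁻¹ * q ^ (n + 1) = 1 - x⁻¹ * q ^ n := fun n ↦ by
    field_simp
    ring
  unfold theta
  rw [tprod_congr hshift, tprod_congr hshift', tprod_one_sub_mul_pow_eq_one_sub_mul hq x⁻¹,
    tprod_one_sub_mul_pow_eq_one_sub_mul hq x, hfirst]
  ring

end Theta

section ThetaExp

open Complex

variable {h : ℂ}

theorem theta_exp_neg (hq : ‖exp h‖ < 1) (u : ℂ) :
    theta (exp h) (exp (-u)) = -exp (-u) * theta (exp h) (exp u) := by
  rw [exp_neg, theta_inv hq (exp_ne_zero u)]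

theorem theta_exp_add (hq : ‖exp h‖ < 1) (v : ℂ) :
    theta (exp h) (exp (v + h)) = -exp (-v) * theta (exp h) (exp v) := by
  rw [exp_add, theta_mul_nome hq (exp_ne_zero h) (exp_ne_zero v), exp_neg]

theorem theta_exp_add_int_mul (hq : ‖exp h‖ < 1) (m : ℤ) (u : ℂ) :
    theta (exp h) (exp (u + m * h)) =
      (-1) ^ m * exp (-(m * u) - m * (m - 1) / 2 * h) * theta (exp h) (exp u) := by
  induction m using Int.induction_on with
  | zero => simp
  | succ k ih =>
    push_cast at ih ⊢
    have hexp : exp (-(u + k * h)) * exp (-(k * u) - k * (k - 1) / 2 * h) =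
        exp (-((k + 1) * u) - (k + 1) * (k + 1 - 1) / 2 * h) := by
      rw [← exp_add]; ring_nf
    rw [show u + (k + 1) * h = u + k * h + h by ring, theta_exp_add hq, ih,
      zpow_add_one₀ (by norm_num)]
    linear_combination (-(-1) ^ (k : ℤ) * theta (exp h) (exp u)) * hexp
  | pred k ih =>
    push_cast at ih ⊢
    have hstep := theta_exp_add hq (u + (-k - 1) * h)
    rw [show u + (-k - 1) * h + h = u + -k * h by ring, ih] at hstep
    have hexp : exp (u + (-k - 1) * h) * exp (-(-k * u) - -k * (-k - 1) / 2 * h) =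
        exp (-((-k - 1) * u) - (-k - 1) * (-k - 1 - 1) / 2 * h) := by
      rw [← exp_add]; ring_nf
    have hinv : exp (u + (-k - 1) * h) * exp (-(u + (-k - 1) * h)) = 1 := by
      rw [← exp_add]; simp
    rw [zpow_sub_one₀ (by norm_num)]
    linear_combination exp (u + (-k - 1) * h) * hstep
      - ((-1) ^ (-(k : ℤ)) * theta (exp h) (exp u)) * hexp
      - theta (exp h) (exp (u + (-k - 1) * h)) * hinv

theorem theta_exp_int_mul_sub (hq : ‖exp h‖ < 1) (m : ℤ) (v : ℂ) :
    theta (exp h) (exp (m * h - v)) =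
      (-1) ^ (m - 1) * exp ((m - 1) * v - m * (m - 1) / 2 * h) * theta (exp h) (exp v) := by
  have hexp : exp (-(m * -v) - m * (m - 1) / 2 * h) * exp (-v) =
      exp ((m - 1) * v - m * (m - 1) / 2 * h) := by
    rw [← exp_add]; ring_nf
  rw [sub_eq_neg_add, theta_exp_add_int_mul hq, theta_exp_neg hq, zpow_sub_one₀ (by norm_num)]
  linear_combination (-(-1) ^ m * theta (exp h) (exp v)) * hexp

end ThetaExp

open Complex in
theorem psi_factorization_general (h β q : ℂ) (hqdef : q = Complex.exp h)
    (hq1 : ‖q‖ < 1)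
    (A : ℤ) (x ℓ : ℂ) (hℓ : Complex.exp ℓ = x)
    (pA qA : ℂ)
    (hqA : qA = Complex.exp (h * (A : ℂ) / 2))
    (hd2 : theta q (x * qA) ≠ 0) :
    (-1 : ℂ) ^ (A - 1) * Complex.exp (((A : ℂ) - (A : ℂ) * β - 1) * ℓ) *
        theta q (x * pA) / theta q (x⁻¹ * pA) =
      (Complex.exp (-(β * (A : ℂ)) / 2 * ℓ) * theta q (x * pA) / theta q (x * qA)) /
        (Complex.exp (-(β * (A : ℂ)) / 2 * (-ℓ)) * theta q (x⁻¹ * pA) /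
          theta q (x⁻¹ * qA)) := by
  subst hqdef
  have hxqA : x * qA = exp (ℓ + h * A / 2) := by rw [exp_add, hℓ, hqA]
  have hxqA' : x⁻¹ * qA = exp (A * h - (ℓ + h * A / 2)) := by
    rw [← hℓ, ← exp_neg, hqA, ← exp_add]; ring_nf
  have hrel : theta (exp h) (x⁻¹ * qA) =
      (-1) ^ (A - 1) * exp ((A - 1) * ℓ) * theta (exp h) (x * qA) := by
    rw [hxqA', theta_exp_int_mul_sub hq1, hxqA]
    ring_nf
  have hexp : exp (-(β * A) / 2 * ℓ) * exp ((A - 1) * ℓ) / exp (-(β * A) / 2 * (-ℓ)) =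
      exp ((A - A * β - 1) * ℓ) := by
    rw [← exp_add, ← exp_sub]; ring_nf
  rw [hrel, ← hexp]
  field_simp

/-- ψ_{ij}(x) = (-1)^{A-1} x^{A-Aβ-1} θ_q(xp^{A/2})/θ_q(x⁻¹p^{A/2}) factorizes as
φ_{ij}(x)/φ_{ij}(x⁻¹) with φ_{ij}(x) = x^{-βA/2} θ_q(xp^{A/2})/θ_q(xq^{A/2}).
Here q = e^h, p = e^{h(1-β)}, p^{A/2} = e^{h(1-β)A/2}, q^{A/2} = e^{hA/2}, and the powers
of x are taken via a fixed branch ℓ of the logarithm of x (so x^c = exp(c·ℓ) and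
(x⁻¹)^c = exp(c·(-ℓ))). -/
theorem psi_factorization (h β q p : ℂ) (hqdef : q = Complex.exp h)
    (hpdef : p = Complex.exp (h * (1 - β)))
    (hq0 : 0 < ‖q‖) (hq1 : ‖q‖ < 1)
    (A : ℤ) (x ℓ : ℂ) (hℓ : Complex.exp ℓ = x)
    (pA qA : ℂ) (hpA : pA = Complex.exp (h * (1 - β) * (A : ℂ) / 2))
    (hqA : qA = Complex.exp (h * (A : ℂ) / 2))
    (hd1 : theta q (x⁻¹ * pA) ≠ 0) (hd2 : theta q (x * qA) ≠ 0)
    (hd3 : theta q (x⁻¹ * qA) ≠ 0) :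
    (-1 : ℂ) ^ (A - 1) * Complex.exp (((A : ℂ) - (A : ℂ) * β - 1) * ℓ) *
        theta q (x * pA) / theta q (x⁻¹ * pA) =
      (Complex.exp (-(β * (A : ℂ)) / 2 * ℓ) * theta q (x * pA) / theta q (x * qA)) /
        (Complex.exp (-(β * (A : ℂ)) / 2 * (-ℓ)) * theta q (x⁻¹ * pA) /
          theta q (x⁻¹ * qA)) :=
  psi_factorization_general h β q hqdef hq1 A x ℓ hℓ pA qA hqA hd2
end

section
/- The generating function f(x) = exp(∑_{m≥1} (1/m)·(1-q^m)(1-(p/q)^m)/(1+p^m)·x^m) (for |x| small, |p| < 1) coincides with f_{1,2}(x) = (x|q,pq⁻¹,p²;p²)_∞/(x|1,pq,p²q⁻¹;p²)_∞. -/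
/-- (x|c;t)_∞ = ∏_{n≥0}(1 - c x tⁿ), a single factor of the basic hypergeometric symbol. -/
noncomputable def ipo (c t x : ℂ) : ℂ := ∏' n : ℕ, (1 - c * x * t ^ n)

/-- f_{1,2}(x) = (x|q,pq⁻¹,p²;p²)_∞ / (x|1,pq,p²q⁻¹;p²)_∞. -/
noncomputable def f12 (p q x : ℂ) : ℂ :=
  ipo q (p ^ 2) x * ipo (p * q⁻¹) (p ^ 2) x * ipo (p ^ 2) (p ^ 2) x /
    (ipo 1 (p ^ 2) x * ipo (p * q) (p ^ 2) x * ipo (p ^ 2 * q⁻¹) (p ^ 2) x)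

/-!
Each factor is an exponential: expanding `log (1 - z tⁿ) = -∑_{m ≥ 1} zᵐ tⁿᵐ / m` and summing
the geometric series in `n` first gives `(z;t)_∞ = exp (-∑_{m ≥ 1} zᵐ / (m (1 - tᵐ)))`. Writing
`1 / (1 + pᵐ) = (1 - pᵐ) / (1 - p²ᵐ)` and expanding `(1 - qᵐ)(1 - (p/q)ᵐ)(1 - pᵐ)` splits the
exponent of `f` into the six series `±∑ (c x)ᵐ / (m (1 - p²ᵐ))` with `c` running over the
parameters of `f_{1,2}`.
-/

open Complex

lemma norm_mul_lt_one {R : Type*} [SeminormedRing R] {a b : R} (ha : ‖a‖ < 1) (hb : ‖b‖ < 1) :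
    ‖a * b‖ < 1 :=
  (norm_mul_le a b).trans_lt
    (mul_lt_one_of_nonneg_of_lt_one_left (norm_nonneg a) ha hb.le)

lemma ne_one_of_norm_lt_one {R : Type*} [SeminormedRing R] [NormOneClass R] {a : R}
    (ha : ‖a‖ < 1) : a ≠ 1 := by
  rintro rfl
  simp at ha

section LogProduct

variable {z t : ℂ}

lemma norm_mul_pow_lt_one (hz : ‖z‖ < 1) (ht : ‖t‖ < 1) (n : ℕ) : ‖z * t ^ n‖ < 1 := by
  rw [norm_mul, norm_pow]
  exact mul_lt_one_of_nonneg_of_lt_one_left (norm_nonneg z) hz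
    (pow_le_one₀ (norm_nonneg t) ht.le)

lemma hasSum_pow_succ_div_succ (hz : ‖z‖ < 1) :
    HasSum (fun m : ℕ => z ^ (m + 1) / ((m : ℂ) + 1)) (-log (1 - z)) := by
  have h := (hasSum_nat_add_iff' 1).mpr (hasSum_taylorSeries_neg_log hz)
  simpa using h

lemma hasSum_mul_pow_pow_succ_div_succ (ht : ‖t‖ < 1) (m : ℕ) :
    HasSum (fun n : ℕ => (z * t ^ n) ^ (m + 1) / ((m : ℂ) + 1))
      (z ^ (m + 1) / (((m : ℂ) + 1) * (1 - t ^ (m + 1)))) := by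
  have hg := hasSum_geometric_of_norm_lt_one (ξ := t ^ (m + 1))
    (by rw [norm_pow]; exact pow_lt_one₀ (norm_nonneg t) ht m.succ_ne_zero)
  rw [div_mul_eq_div_div, div_eq_mul_inv]
  exact (hg.mul_left (z ^ (m + 1) / ((m : ℂ) + 1))).congr_fun fun n => by ring

lemma summable_mul_pow_pow_succ_div_succ (hz : ‖z‖ < 1) (ht : ‖t‖ < 1) :
    Summable (fun nm : ℕ × ℕ => (z * t ^ nm.1) ^ (nm.2 + 1) / ((nm.2 : ℂ) + 1)) := by
  have hmajorant : Summable (fun nm : ℕ × ℕ => ‖t‖ ^ nm.1 * ‖z‖ ^ nm.2) :=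
    (summable_geometric_of_lt_one (norm_nonneg t) ht).mul_of_nonneg
      (summable_geometric_of_lt_one (norm_nonneg z) hz)
      (fun n => by positivity) (fun m => by positivity)
  refine hmajorant.of_norm_bounded fun ⟨n, m⟩ => ?_
  have hden : (1 : ℝ) ≤ ‖(m : ℂ) + 1‖ := by
    rw [← Nat.cast_succ, norm_natCast]
    exact_mod_cast m.succ_pos
  rw [norm_div, mul_pow, norm_mul, norm_pow, norm_pow, norm_pow, ← pow_mul]
  calc ‖z‖ ^ (m + 1) * ‖t‖ ^ (n * (m + 1)) / ‖(m : ℂ) + 1‖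
      ≤ ‖z‖ ^ (m + 1) * ‖t‖ ^ (n * (m + 1)) := div_le_self (by positivity) hden
    _ ≤ ‖z‖ ^ m * ‖t‖ ^ n :=
      mul_le_mul (pow_le_pow_of_le_one (norm_nonneg z) hz.le m.le_succ)
        (pow_le_pow_of_le_one (norm_nonneg t) ht.le (Nat.le_mul_of_pos_right n m.succ_pos))
        (by positivity) (by positivity)
    _ = ‖t‖ ^ n * ‖z‖ ^ m := mul_comm _ _

theorem exists_hasSum_and_hasProd_one_sub_mul_pow (hz : ‖z‖ < 1) (ht : ‖t‖ < 1) :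
    ∃ S : ℂ, HasSum (fun m : ℕ => z ^ (m + 1) / (((m : ℂ) + 1) * (1 - t ^ (m + 1)))) S ∧
      HasProd (fun n : ℕ => 1 - z * t ^ n) (exp (-S)) := by
  obtain ⟨S, hS⟩ := summable_mul_pow_pow_succ_div_succ hz ht
  have hfib (n : ℕ) :
      HasSum (fun m : ℕ => (z * t ^ n) ^ (m + 1) / ((m : ℂ) + 1)) (-log (1 - z * t ^ n)) :=
    hasSum_pow_succ_div_succ (norm_mul_pow_lt_one hz ht n)
  refine ⟨S, ?_, ?_⟩
  · exact ((Equiv.prodComm ℕ ℕ).hasSum_iff.mpr hS).prod_fiberwise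
      fun m => hasSum_mul_pow_pow_succ_div_succ ht m
  · have hlog : HasSum (fun n : ℕ => log (1 - z * t ^ n)) (-S) := by
      simpa only [neg_neg] using (hS.prod_fiberwise hfib).neg
    refine hlog.cexp.congr_fun fun n => (exp_log ?_).symm
    exact sub_ne_zero.mpr (ne_one_of_norm_lt_one (norm_mul_pow_lt_one hz ht n)).symm

lemma exists_hasSum_and_ipo_eq_exp {c x : ℂ} (hcx : ‖c * x‖ < 1) (ht : ‖t‖ < 1) :
    ∃ S : ℂ, HasSum (fun m : ℕ => (c * x) ^ (m + 1) / (((m : ℂ) + 1) * (1 - t ^ (m + 1)))) S ∧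
      ipo c t x = exp (-S) :=
  let ⟨S, hS, hprod⟩ := exists_hasSum_and_hasProd_one_sub_mul_pow hcx ht
  ⟨S, hS, hprod.tprod_eq⟩

end LogProduct

lemma coeff_mul_pow_eq {K : Type*} [Field K] {p q : K} (x M : K) {k : ℕ} (hq : q ≠ 0)
    (hp : (p ^ 2) ^ k ≠ 1) :
    1 / M * ((1 - q ^ k) * (1 - (p / q) ^ k) / (1 + p ^ k)) * x ^ k =
      (1 * x) ^ k / (M * (1 - (p ^ 2) ^ k)) + (p * q * x) ^ k / (M * (1 - (p ^ 2) ^ k)) +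
        (p ^ 2 * q⁻¹ * x) ^ k / (M * (1 - (p ^ 2) ^ k)) -
      ((q * x) ^ k / (M * (1 - (p ^ 2) ^ k)) + (p * q⁻¹ * x) ^ k / (M * (1 - (p ^ 2) ^ k)) +
        (p ^ 2 * x) ^ k / (M * (1 - (p ^ 2) ^ k))) := by
  have hfac : 1 - (p ^ 2) ^ k = (1 - p ^ k) * (1 + p ^ k) := by ring
  have hminus : 1 - p ^ k ≠ 0 := left_ne_zero_of_mul (hfac ▸ sub_ne_zero.mpr hp.symm)
  have hplus : 1 + p ^ k ≠ 0 := right_ne_zero_of_mul (hfac ▸ sub_ne_zero.mpr hp.symm)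
  rw [hfac]
  simp only [mul_pow, div_pow, inv_pow]
  field_simp
  ring

theorem generating_function_eq_f12_general (p q x : ℂ)
    (hp1 : ‖p‖ < 1) (hq : q ≠ 0)
    (hx1 : ‖x‖ < 1) (hx2 : ‖x * q‖ < 1)
    (hx3 : ‖x * p / q‖ < 1) :
    Complex.exp (∑' m : ℕ,
        1 / ((m : ℂ) + 1) *
          ((1 - q ^ (m + 1)) * (1 - (p / q) ^ (m + 1)) / (1 + p ^ (m + 1))) * x ^ (m + 1)) =
      f12 p q x := by
  have hp2 : ‖p ^ 2‖ < 1 := by rw [sq]; exact norm_mul_lt_one hp1 hp1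
  obtain ⟨S₁, hS₁, eS₁⟩ := exists_hasSum_and_ipo_eq_exp (x := x) (c := 1) (by rwa [one_mul]) hp2
  obtain ⟨S₂, hS₂, eS₂⟩ := exists_hasSum_and_ipo_eq_exp (x := x) (c := p * q)
    (by rw [mul_assoc, mul_comm q]; exact norm_mul_lt_one hp1 hx2) hp2
  obtain ⟨S₃, hS₃, eS₃⟩ := exists_hasSum_and_ipo_eq_exp (x := x) (c := p ^ 2 * q⁻¹)
    (by rw [show p ^ 2 * q⁻¹ * x = p * (x * p / q) by ring]; exact norm_mul_lt_one hp1 hx3) hp2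
  obtain ⟨T₁, hT₁, eT₁⟩ := exists_hasSum_and_ipo_eq_exp (x := x) (c := q) (by rwa [mul_comm]) hp2
  obtain ⟨T₂, hT₂, eT₂⟩ := exists_hasSum_and_ipo_eq_exp (x := x) (c := p * q⁻¹)
    (by rwa [show p * q⁻¹ * x = x * p / q by ring]) hp2
  obtain ⟨T₃, hT₃, eT₃⟩ := exists_hasSum_and_ipo_eq_exp (x := x) (c := p ^ 2)
    (norm_mul_lt_one hp2 hx1) hp2
  have hp2pow (m : ℕ) : (p ^ 2) ^ (m + 1) ≠ 1 := ne_one_of_norm_lt_one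
    (by rw [norm_pow]; exact pow_lt_one₀ (norm_nonneg _) hp2 m.succ_ne_zero)
  have hsum := (((hS₁.add hS₂).add hS₃).sub ((hT₁.add hT₂).add hT₃)).congr_fun
    fun m => coeff_mul_pow_eq x ((m : ℂ) + 1) hq (hp2pow m)
  rw [hsum.tsum_eq, f12, eS₁, eS₂, eS₃, eT₁, eT₂, eT₃, ← exp_add, ← exp_add, ← exp_add, ← exp_add,
    ← exp_sub]
  congr 1
  ring

/-- The generating function f(x) = exp(∑_{m≥1} (1/m)·(1-q^m)(1-(p/q)^m)/(1+p^m)·x^m)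
coincides with f_{1,2}(x) = (x|q,pq⁻¹,p²;p²)_∞/(x|1,pq,p²q⁻¹;p²)_∞. -/
theorem generating_function_eq_f12 (p q x : ℂ) (hp0 : 0 < ‖p‖)
    (hp1 : ‖p‖ < 1) (hq : q ≠ 0)
    (hx1 : ‖x‖ < 1) (hx2 : ‖x * q‖ < 1)
    (hx3 : ‖x * p / q‖ < 1)
    (hden : ipo 1 (p ^ 2) x * ipo (p * q) (p ^ 2) x * ipo (p ^ 2 * q⁻¹) (p ^ 2) x ≠ 0) :
    Complex.exp (∑' m : ℕ,
        1 / ((m : ℂ) + 1) *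
          ((1 - q ^ (m + 1)) * (1 - (p / q) ^ (m + 1)) / (1 + p ^ (m + 1))) * x ^ (m + 1)) =
      f12 p q x :=
  generating_function_eq_f12_general p q x hp1 hq hx1 hx2 hx3
end
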